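/- arXiv:nlin/0412016 — 7 statements merged into one kernel-verified Lean document; each statement's English description precedes it below -/
import Mathlib

section
/- Let w : U → ℂ be holomorphic with w(0) = 0, and let g : U → ℂ be holomorphic with g(0) = 0. Write a_k for the k-th Taylor coefficient of w at 0 and c_k for the k-th Taylor coefficient of g at 0, and set a = (a_1,…,a_n), c = (c_1,…,c_n) ∈ ℂ^n. Then for every integer s ≥ 0 and every k with 1 ≤ k ≤ n, the k-th Taylor coefficient at 0 of the product w^s · g equals the k-th component of the vector A(a)^s c. -/
open Complex Metric

/-- The `k`-th Taylor coefficient of `f` at `0`. -/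
noncomputable def taylorCoeff (f : ℂ → ℂ) (k : ℕ) : ℂ :=
  iteratedDeriv k f 0 / Nat.factorial k

/-- The lower-triangular nilpotent Toeplitz matrix `A(a)` with `A(a)_{j,k} = a_{j-k}`
(1-indexed) for `j > k` and `0` otherwise. -/
noncomputable def toeplitzA {n : ℕ} (a : Fin n → ℂ) : Matrix (Fin n) (Fin n) ℂ :=
  Matrix.of fun j k =>
    if _ : (k : ℕ) < (j : ℕ) then a ⟨(j : ℕ) - (k : ℕ) - 1, by have := j.isLt; omega⟩ else 0

/-!
Since `w 0 = 0`, for `h` with `h 0 = 0` the coefficient of `z ^ (k + 1)` in `w * h` involves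
only `a_1, …, a_k` and the coefficients `h_1, …, h_k` of `h`; by the Cauchy product formula
(the Leibniz rule for iterated derivatives) multiplication by `w` therefore acts on
`(h_1, …, h_n)` as the matrix `A(a)`. Induction on `s`, starting from `g`, gives the claim.
-/

open Finset
open scoped Matrix

theorem taylorCoeff_zero (f : ℂ → ℂ) : taylorCoeff f 0 = f 0 := by
  simp [taylorCoeff]

theorem taylorCoeff_mul {f h : ℂ → ℂ} {m : ℕ} (hf : ContDiffAt ℂ m f 0)
    (hh : ContDiffAt ℂ m h 0) :
    taylorCoeff (fun z => f z * h z) m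
      = ∑ p ∈ antidiagonal m, taylorCoeff f p.1 * taylorCoeff h p.2 := by
  rw [taylorCoeff, iteratedDeriv_fun_mul hf hh, sum_div,
    Nat.sum_antidiagonal_eq_sum_range_succ (fun i j => taylorCoeff f i * taylorCoeff h j)]
  refine sum_congr rfl fun i hi => ?_
  rw [Nat.cast_choose ℂ (mem_range_succ_iff.mp hi), taylorCoeff, taylorCoeff]
  have := m.factorial_ne_zero
  field_simp

theorem toeplitzA_apply_mul {n : ℕ} {α β : ℕ → ℂ} {a v : Fin n → ℂ}
    (ha : ∀ i : Fin n, a i = α (i + 1)) (hv : ∀ i : Fin n, v i = β (i + 1)) (k j : Fin n) :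
    toeplitzA a k j * v j = if (j : ℕ) < k then α (k - j) * β (j + 1) else 0 := by
  simp only [toeplitzA, Matrix.of_apply]
  split_ifs with hj
  · rw [ha, hv, Nat.sub_add_cancel (Nat.sub_pos_of_lt hj)]
  · rw [zero_mul]

theorem sum_antidiagonal_succ_eq_sum_range {R : Type*} [Semiring R] {α β : ℕ → R}
    (hα : α 0 = 0) (hβ : β 0 = 0) (k : ℕ) :
    ∑ p ∈ antidiagonal (k + 1), α p.1 * β p.2 = ∑ j ∈ range k, α (k - j) * β (j + 1) := by
  rw [← Nat.sum_antidiagonal_swap]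
  simp only [Prod.fst_swap, Prod.snd_swap]
  rw [Nat.sum_antidiagonal_eq_sum_range_succ (fun i j => α j * β i), sum_range_succ',
    sum_range_succ]
  simp [hα, hβ]

theorem toeplitzA_mulVec_eq_sum_antidiagonal {n : ℕ} {α β : ℕ → ℂ} (hα : α 0 = 0)
    (hβ : β 0 = 0) {a v : Fin n → ℂ} (ha : ∀ i : Fin n, a i = α (i + 1))
    (hv : ∀ i : Fin n, v i = β (i + 1)) (k : Fin n) :
    (toeplitzA a *ᵥ v) k = ∑ p ∈ antidiagonal (k + 1 : ℕ), α p.1 * β p.2 := by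
  rw [sum_antidiagonal_succ_eq_sum_range hα hβ, Matrix.mulVec, dotProduct]
  simp only [toeplitzA_apply_mul ha hv]
  rw [Fin.sum_univ_eq_sum_range (fun j => if j < k then α (k - j) * β (j + 1) else 0),
    ← sum_filter]
  congr 1
  ext j
  simp only [mem_filter, mem_range]
  omega

/-- if `w, g` are holomorphic on the unit disk and vanish at the origin,
with first `n` Taylor coefficients `a = (a_1, …, a_n)` and `c = (c_1, …, c_n)`,
then for every `s ≥ 0` and `1 ≤ k ≤ n`, the `k`-th Taylor coefficient of
`w^s · g` equals `(A(a)^s c)_k`. -/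
theorem taylorCoeff_pow_mul_eq_toeplitz_pow_mulVec
    (n : ℕ) (w g : ℂ → ℂ)
    (hw : DifferentiableOn ℂ w (ball (0 : ℂ) 1)) (hw0 : w 0 = 0)
    (hg : DifferentiableOn ℂ g (ball (0 : ℂ) 1)) (hg0 : g 0 = 0)
    (a c : Fin n → ℂ)
    (ha : ∀ k : Fin n, a k = taylorCoeff w (k.1 + 1))
    (hc : ∀ k : Fin n, c k = taylorCoeff g (k.1 + 1)) :
    ∀ s : ℕ, ∀ k : Fin n,
      taylorCoeff (fun z => w z ^ s * g z) (k.1 + 1)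
        = ((toeplitzA a ^ s).mulVec c) k := by
  have hw : AnalyticAt ℂ w 0 := hw.analyticAt (ball_mem_nhds 0 one_pos)
  have hg : AnalyticAt ℂ g 0 := hg.analyticAt (ball_mem_nhds 0 one_pos)
  intro s
  induction s with
  | zero => simpa using fun k => (hc k).symm
  | succ s ih =>
    intro k
    have hH : AnalyticAt ℂ (fun z => w z ^ s * g z) 0 := (hw.pow s).mul hg
    calc taylorCoeff (fun z => w z ^ (s + 1) * g z) (k + 1)
        = taylorCoeff (fun z => w z * (w z ^ s * g z)) (k + 1) := by
          simp only [pow_succ', mul_assoc]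
      _ = ∑ p ∈ antidiagonal (k + 1 : ℕ),
            taylorCoeff w p.1 * taylorCoeff (fun z => w z ^ s * g z) p.2 :=
        taylorCoeff_mul hw.contDiffAt hH.contDiffAt
      _ = (toeplitzA a *ᵥ (toeplitzA a ^ s *ᵥ c)) k := by
        refine (toeplitzA_mulVec_eq_sum_antidiagonal ?_ ?_ ha (fun i => (ih i).symm) k).symm
        · rw [taylorCoeff_zero, hw0]
        · simp [taylorCoeff_zero, hg0]
      _ = (toeplitzA a ^ (s + 1) *ᵥ c) k := by rw [pow_succ', Matrix.mulVec_mulVec]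
end

section
/- Let I ⊆ ℝ be an interval, u : I → ℝ, and let w : U × I → ℂ be such that for each t ∈ I the map z ↦ w(z,t) is holomorphic on U with |w(z,t)| < 1, for each z ∈ U the map t ↦ w(z,t) is differentiable and satisfies the Löwner equation ∂w/∂t = −w·p(w,u(t)), the map z ↦ ∂w/∂t(z,t) is holomorphic on U, the z-derivative ∂_z w(z,t) is nonvanishing, and the mixed partial derivatives commute: ∂_t ∂_z w = ∂_z ∂_t w. Then for any fixed holomorphic function h : U → ℂ, the function t ↦ h(z)/∂_z w(z,t) is differentiable and satisfies d/dt [h(z)/∂_z w(z,t)] = (h(z)/∂_z w(z,t)) · [ (e^{iu(t)}+w)/(e^{iu(t)}−w) + 2e^{iu(t)}w/(e^{iu(t)}−w)² ] for every z ∈ U and t ∈ I. -/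
open Complex Metric

/-- The Löwner kernel `p(ζ, u) = (e^{iu} + ζ)/(e^{iu} - ζ)`. -/
noncomputable def lkernel (ζ : ℂ) (u : ℝ) : ℂ :=
  (Complex.exp (u * Complex.I) + ζ) / (Complex.exp (u * Complex.I) - ζ)

/-!
Writing `W(t) = ∂_z w(z,t)` and `F(ζ) = -ζ p(ζ,u)`, the commuting mixed partials and the chain rule
give `W' = F'(w) W = -(p + 2e^{iu}w/(e^{iu}-w)²) W`, and the quotient rule then turns this
logarithmic derivative into that of `h(z)/W`, with the opposite sign.
-/

lemma exp_ofReal_mul_I_ne_of_norm_lt_one {ζ : ℂ} (hζ : ‖ζ‖ < 1) (u : ℝ) :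
    Complex.exp ((u : ℂ) * Complex.I) ≠ ζ := by
  rintro rfl
  rw [Complex.norm_exp_ofReal_mul_I] at hζ
  exact lt_irrefl 1 hζ

lemma hasDerivAt_neg_mul_lkernel {ζ : ℂ} {u : ℝ} (hζ : Complex.exp ((u : ℂ) * Complex.I) ≠ ζ) :
    HasDerivAt (fun ζ => -ζ * lkernel ζ u)
      (-(lkernel ζ u + 2 * Complex.exp ((u : ℂ) * Complex.I) * ζ /
          (Complex.exp ((u : ℂ) * Complex.I) - ζ) ^ 2)) ζ := by
  set e := Complex.exp ((u : ℂ) * Complex.I)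
  have hne : e - ζ ≠ 0 := sub_ne_zero.mpr hζ
  have hquot := ((hasDerivAt_id' ζ).const_add e).fun_div ((hasDerivAt_id' ζ).const_sub e) hne
  refine (hasDerivAt_id' ζ).fun_neg.fun_mul hquot |>.congr_deriv ?_
  rw [show lkernel ζ u = (e + ζ) / (e - ζ) from rfl]
  field_simp
  ring

lemma deriv_neg_mul_lkernel_comp {f : ℂ → ℂ} {z : ℂ} (u : ℝ) (hf : DifferentiableAt ℂ f z)
    (hfz : ‖f z‖ < 1) :
    deriv (fun z => -(f z) * lkernel (f z) u) z =
      -(lkernel (f z) u + 2 * Complex.exp ((u : ℂ) * Complex.I) * f z /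
          (Complex.exp ((u : ℂ) * Complex.I) - f z) ^ 2) * deriv f z :=
  ((hasDerivAt_neg_mul_lkernel (exp_ofReal_mul_I_ne_of_norm_lt_one hfz u)).comp z
    hf.hasDerivAt).deriv

lemma HasDerivWithinAt.const_div_of_eq_neg_mul {g : ℝ → ℂ} {s : Set ℝ} {t : ℝ} {D : ℂ}
    (c : ℂ) (hg : HasDerivWithinAt g (-D * g t) s t) (hgt : g t ≠ 0) :
    HasDerivWithinAt (fun s => c / g s) (c / g t * D) s t := by
  refine (hasDerivWithinAt_const t s c).fun_div hg hgt |>.congr_deriv ?_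
  field_simp
  ring

theorem hasDerivWithinAt_div_derivZ_loewner_general
    (I : Set ℝ) (u : ℝ → ℝ) (w : ℂ → ℝ → ℂ)
    (hol : ∀ t ∈ I, DifferentiableOn ℂ (fun z => w z t) (ball (0 : ℂ) 1))
    (hbd : ∀ t ∈ I, ∀ z ∈ ball (0 : ℂ) 1, ‖w z t‖ < 1)
    (hnz : ∀ t ∈ I, ∀ z ∈ ball (0 : ℂ) 1, deriv (fun z => w z t) z ≠ 0)
    (hmix : ∀ z ∈ ball (0 : ℂ) 1, ∀ t ∈ I,
      HasDerivWithinAt (fun s => deriv (fun z => w z s) z)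
        (deriv (fun z => -(w z t) * lkernel (w z t) (u t)) z) I t)
    (h : ℂ → ℂ) :
    ∀ z ∈ ball (0 : ℂ) 1, ∀ t ∈ I,
      HasDerivWithinAt (fun s => h z / deriv (fun z => w z s) z)
        ((h z / deriv (fun z => w z t) z) *
          (lkernel (w z t) (u t) +
            2 * Complex.exp ((u t : ℂ) * Complex.I) * w z t /
              (Complex.exp ((u t : ℂ) * Complex.I) - w z t) ^ 2)) I t := by
  intro z hz t ht
  have hdiff : DifferentiableAt ℂ (fun z => w z t) z :=
    (hol t ht).differentiableAt (isOpen_ball.mem_nhds hz)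
  have hderivZ := hmix z hz t ht
  rw [deriv_neg_mul_lkernel_comp (u t) hdiff (hbd t ht z hz)] at hderivZ
  exact hderivZ.const_div_of_eq_neg_mul (h z) (hnz t ht z hz)

/-- along the Löwner flow `∂w/∂t = -w·p(w,u(t))`, for any fixed
holomorphic `h` the function `t ↦ h(z)/∂_z w(z,t)` is differentiable with
`d/dt [h(z)/∂_z w(z,t)] = (h(z)/∂_z w(z,t)) · [p(w,u(t)) + 2e^{iu(t)}w/(e^{iu(t)}-w)²]`. -/
theorem hasDerivWithinAt_div_derivZ_loewner
    (I : Set ℝ) (hI : Convex ℝ I) (u : ℝ → ℝ) (w : ℂ → ℝ → ℂ)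
    (hol : ∀ t ∈ I, DifferentiableOn ℂ (fun z => w z t) (ball (0 : ℂ) 1))
    (hbd : ∀ t ∈ I, ∀ z ∈ ball (0 : ℂ) 1, ‖w z t‖ < 1)
    (hode : ∀ z ∈ ball (0 : ℂ) 1, ∀ t ∈ I,
      HasDerivWithinAt (fun s => w z s) (-(w z t) * lkernel (w z t) (u t)) I t)
    (hthol : ∀ t ∈ I,
      DifferentiableOn ℂ (fun z => -(w z t) * lkernel (w z t) (u t)) (ball (0 : ℂ) 1))
    (hnz : ∀ t ∈ I, ∀ z ∈ ball (0 : ℂ) 1, deriv (fun z => w z t) z ≠ 0)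
    (hmix : ∀ z ∈ ball (0 : ℂ) 1, ∀ t ∈ I,
      HasDerivWithinAt (fun s => deriv (fun z => w z s) z)
        (deriv (fun z => -(w z t) * lkernel (w z t) (u t)) z) I t)
    (h : ℂ → ℂ) (hh : DifferentiableOn ℂ h (ball (0 : ℂ) 1)) :
    ∀ z ∈ ball (0 : ℂ) 1, ∀ t ∈ I,
      HasDerivWithinAt (fun s => h z / deriv (fun z => w z s) z)
        ((h z / deriv (fun z => w z t) z) *
          (lkernel (w z t) (u t) +
            2 * Complex.exp ((u t : ℂ) * Complex.I) * w z t /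
              (Complex.exp ((u t : ℂ) * Complex.I) - w z t) ^ 2)) I t :=
  hasDerivWithinAt_div_derivZ_loewner_general I u w hol hbd hnz hmix h
end

section
/- Fix n ≥ 1 and u ∈ ℝ, and define the polynomial function F : ℂ^n × ℂ^n → ℂ by F(a,q) = ∑_{k=1}^{n} (−a − 2∑_{s=1}^{n−1} e^{−isu} A(a)^s a)_k · q_k. Then for every a, q ∈ ℂ^n and every 1 ≤ k ≤ n, the complex partial derivative satisfies −∂F/∂a_k (a,q) = q_k + 2∑_{s=1}^{n−1} e^{−isu}(s+1)((A(a)ᵀ)^s q)_k. (That is, the adjoint system q̇ = (E + 2∑_{s=1}^{n−1} e^{−isu}(s+1)(A(a)ᵀ)^s)q coincides with the Hamiltonian equation q̇ = −∂F/∂a.) -/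
open Complex Metric

/-- The complex Hamiltonian `F(a,q) = ∑_{k=1}^n (-a - 2∑_{s=1}^{n-1} e^{-isu} A(a)^s a)_k q_k`. -/
noncomputable def hamF (n : ℕ) (u : ℝ) (a q : Fin n → ℂ) : ℂ :=
  ∑ k : Fin n, (-(a k) - 2 * ∑ s ∈ Finset.Icc 1 (n - 1),
      Complex.exp (-(s : ℂ) * (u : ℂ) * Complex.I) * ((toeplitzA a ^ s).mulVec a) k) * q k

/-!
`A(a)` is the matrix of multiplication by `X · a(X)` on `ℂ[X]/(X^n)`, where
`a(X) = ∑ a_j X^j`. Hence `A(a)` is linear in `a`, any two such matrices commute, and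
`A(a) b = A(b) a`. Differentiating `A(a)^s a` in the direction `e` therefore gives
`s A(a)^(s-1) A(e) a + A(a)^s e = s A(a)^(s-1) A(a) e + A(a)^s e = (s+1) A(a)^s e`,
and pairing with `q` moves the powers onto `q` as `(A(a)ᵀ)^s`.
-/

open Matrix

section Calculus

variable {𝕜 m ι : Type*} [NontriviallyNormedField 𝕜] [Fintype ι]

theorem HasDerivAt.matrix_mulVec (M : Matrix m ι 𝕜) {v : 𝕜 → ι → 𝕜} {v' : ι → 𝕜} {t : 𝕜}
    (hv : HasDerivAt v v' t) : HasDerivAt (fun s => M *ᵥ v s) (M *ᵥ v') t :=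
  hasDerivAt_pi.2 fun i => HasDerivAt.fun_sum fun j _ => (hasDerivAt_pi.1 hv j).const_mul (M i j)

theorem HasDerivAt.dotProduct_const {v : 𝕜 → ι → 𝕜} {v' : ι → 𝕜} {t : 𝕜}
    (hv : HasDerivAt v v' t) (w : ι → 𝕜) : HasDerivAt (fun s => v s ⬝ᵥ w) (v' ⬝ᵥ w) t :=
  HasDerivAt.fun_sum fun j _ => (hasDerivAt_pi.1 hv j).mul_const (w j)

theorem hasDerivAt_add_smul_pow_mulVec_add_smul [DecidableEq ι] {A N : Matrix ι ι 𝕜}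
    (hAN : Commute A N) {a e : ι → 𝕜} (hNa : N *ᵥ a = A *ᵥ e) (s : ℕ) :
    HasDerivAt (fun t : 𝕜 => (A + t • N) ^ s *ᵥ (a + t • e)) ((s + 1 : 𝕜) • (A ^ s *ᵥ e)) 0 := by
  induction s with
  | zero => simpa using ((hasDerivAt_id (0 : 𝕜)).smul_const e).const_add a
  | succ s ih =>
    have hNA : N *ᵥ (A ^ s *ᵥ a) = A ^ (s + 1) *ᵥ e := by
      rw [mulVec_mulVec, ← (hAN.pow_left s).eq, ← mulVec_mulVec, hNa, mulVec_mulVec, ← pow_succ]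
    simp_rw [pow_succ', ← mulVec_mulVec, add_mulVec, smul_mulVec]
    refine ((ih.matrix_mulVec A).fun_add
      ((hasDerivAt_id' 0).fun_smul (ih.matrix_mulVec N))).congr_deriv ?_
    simp only [mulVec_smul, mulVec_mulVec, ← pow_succ', zero_smul, add_zero, hNA, one_smul,
      zero_add]
    push_cast
    module

end Calculus

theorem Function.update_eq_add_smul_single {ι R : Type*} [DecidableEq ι] [Ring R]
    (a : ι → R) (k : ι) (z : R) : Function.update a k z = a + (z - a k) • Pi.single k 1 := by
  rw [Pi.update_eq_sub_add_single]
  ext i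
  rcases eq_or_ne i k with rfl | hi <;> simp [*]

theorem Matrix.mulVec_single_one_dotProduct {ι R : Type*} [Fintype ι] [DecidableEq ι]
    [CommSemiring R] (M : Matrix ι ι R) (k : ι) (q : ι → R) :
    M *ᵥ Pi.single k 1 ⬝ᵥ q = (Mᵀ *ᵥ q) k := by
  rw [mulVec_single_one, mulVec_transpose, dotProduct_comm]
  rfl

def Fin.reflect {n : ℕ} (c : ℕ) (x : Fin n) : Fin n :=
  if h : (x : ℕ) ≤ c ∧ c - x < n then ⟨c - x, h.2⟩ else x

theorem Fin.reflect_involutive {n : ℕ} (c : ℕ) : Function.Involutive (Fin.reflect (n := n) c) := by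
  intro x
  unfold Fin.reflect
  split_ifs <;> ext <;> simp_all <;> omega

section Toeplitz

variable {n : ℕ}

theorem toeplitzA_add_smul (a b : Fin n → ℂ) (t : ℂ) :
    toeplitzA (a + t • b) = toeplitzA a + t • toeplitzA b := by
  ext i j
  simp only [toeplitzA, of_apply, Matrix.add_apply, Matrix.smul_apply, Pi.add_apply,
    Pi.smul_apply, smul_eq_mul]
  split_ifs <;> simp

theorem toeplitzA_mulVec_comm (a b : Fin n → ℂ) : toeplitzA a *ᵥ b = toeplitzA b *ᵥ a := by
  ext i
  -- After reindexing, each summand is either the mirror image of its partner or zero on both sides.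
  refine Fintype.sum_equiv (Fin.reflect_involutive (i - 1)).toPerm _ _ fun x => ?_
  rw [Function.Involutive.coe_toPerm, Fin.reflect]
  split_ifs <;> simp only [toeplitzA, of_apply] <;> split_ifs
  all_goals first
    | (exfalso; have := i.isLt; omega)
    | (rw [mul_comm]; congr 1 <;> congr 1 <;> ext <;> simp only <;> omega)
    | simp only [zero_mul]

theorem toeplitzA_commute (a b : Fin n → ℂ) : Commute (toeplitzA a) (toeplitzA b) := by
  ext i j
  refine Fintype.sum_equiv (Fin.reflect_involutive (i + j)).toPerm _ _ fun x => ?_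
  rw [Function.Involutive.coe_toPerm, Fin.reflect]
  split_ifs <;> simp only [toeplitzA, of_apply] <;> split_ifs
  all_goals first
    | (exfalso; have := i.isLt; omega)
    | (rw [mul_comm]; congr 1 <;> congr 1 <;> ext <;> simp only <;> omega)
    | simp only [zero_mul, mul_zero]

end Toeplitz

theorem hamF_eq_dotProduct (n : ℕ) (u : ℝ) (a q : Fin n → ℂ) :
    hamF n u a q = (-a - (2 : ℂ) • ∑ s ∈ Finset.Icc 1 (n - 1),
      Complex.exp (-(s : ℂ) * u * I) • (toeplitzA a ^ s *ᵥ a)) ⬝ᵥ q := by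
  simp [hamF, dotProduct, Finset.sum_apply, Finset.mul_sum]

theorem hasDerivAt_hamF_add_smul (n : ℕ) (u : ℝ) (a e q : Fin n → ℂ) :
    HasDerivAt (fun t : ℂ => hamF n u (a + t • e) q)
      ((-e - (2 : ℂ) • ∑ s ∈ Finset.Icc 1 (n - 1),
        Complex.exp (-(s : ℂ) * u * I) • ((s + 1 : ℂ) • (toeplitzA a ^ s *ᵥ e))) ⬝ᵥ q) 0 := by
  simp_rw [hamF_eq_dotProduct, toeplitzA_add_smul]
  have hpow (s : ℕ) := hasDerivAt_add_smul_pow_mulVec_add_smul (toeplitzA_commute a e)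
    (toeplitzA_mulVec_comm e a) s
  have hsum := (HasDerivAt.fun_sum (u := Finset.Icc 1 (n - 1)) fun s _ =>
    (hpow s).fun_const_smul (Complex.exp (-(s : ℂ) * u * I))).fun_const_smul (2 : ℂ)
  have hlin := (((hasDerivAt_id' (0 : ℂ)).smul_const e).const_add a).fun_neg
  exact ((hlin.fun_sub hsum).dotProduct_const q).congr_deriv (by rw [one_smul])

theorem adjoint_is_hamiltonian_general
    (n : ℕ) (u : ℝ) (a q : Fin n → ℂ) (k : Fin n) :
    -(deriv (fun z => hamF n u (Function.update a k z) q) (a k))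
      = q k + 2 * ∑ s ∈ Finset.Icc 1 (n - 1),
          Complex.exp (-(s : ℂ) * (u : ℂ) * Complex.I) * ((s : ℂ) + 1) *
            (((toeplitzA a).transpose ^ s).mulVec q) k := by
  have h₀ := hasDerivAt_hamF_add_smul n u a (Pi.single k 1) q
  rw [← sub_self (a k)] at h₀
  have hF := h₀.comp_sub_const (a k) (a k)
  simp_rw [← Function.update_eq_add_smul_single] at hF
  rw [hF.deriv]
  simp only [sub_dotProduct, neg_dotProduct, single_dotProduct, smul_dotProduct, sum_dotProduct,
    mulVec_single_one_dotProduct, transpose_pow, smul_eq_mul, one_mul, mul_assoc]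
  ring

/-- the adjoint system is Hamiltonian:
`-∂F/∂a_k (a,q) = q_k + 2∑_{s=1}^{n-1} e^{-isu}(s+1)((A(a)ᵀ)^s q)_k`. -/
theorem adjoint_is_hamiltonian
    (n : ℕ) (hn : 1 ≤ n) (u : ℝ) (a q : Fin n → ℂ) (k : Fin n) :
    -(deriv (fun z => hamF n u (Function.update a k z) q) (a k))
      = q k + 2 * ∑ s ∈ Finset.Icc 1 (n - 1),
          Complex.exp (-(s : ℂ) * (u : ℂ) * Complex.I) * ((s : ℂ) + 1) *
            (((toeplitzA a).transpose ^ s).mulVec q) k :=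
  adjoint_is_hamiltonian_general n u a q k
end

section
/- Fix n ≥ 1, let I ⊆ ℝ be an interval, and let u : I → ℝ be continuous. Suppose a : I → ℂ^n is differentiable and satisfies the phase system a'(t) = −a(t) − 2∑_{s=1}^{n−1} e^{−isu(t)} A(a(t))^s a(t), and q : I → ℂ^n is differentiable and satisfies the adjoint system q'(t) = q(t) + 2∑_{s=1}^{n−1} e^{−isu(t)}(s+1)(A(a(t))ᵀ)^s q(t). Then for every 1 ≤ j ≤ n, the function t ↦ Φ_j(a(t), q(t)) = ∑_{m=j}^{n} (m−j+1) a_{m−j+1}(t) q_m(t) is constant on I. (That is, Φ_1,…,Φ_n are first integrals of the coupled system.) -/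
open Complex Metric

/-- `Φ_j(a,p) = ∑_{m=j}^n (m-j+1) a_{m-j+1} p_m` (1-indexed). -/
noncomputable def Phi {n : ℕ} (j : Fin n) (a p : Fin n → ℂ) : ℂ :=
  ∑ m : Fin n, if _ : j.1 ≤ m.1 then
    ((m.1 - j.1 + 1 : ℕ) : ℂ) * a ⟨m.1 - j.1, by have := m.isLt; omega⟩ * p m
  else 0

/-!
Identify `v : Fin n → ℂ` with the polynomial `∑ vᵢ Xⁱ` modulo `X ^ n`; a lower-triangular Toeplitz
matrix is then the matrix of multiplication by a polynomial. If `f` corresponds to `a`, then `A(a)`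
multiplies by `P = X f` and `A(a) ^ s a` corresponds to `P ^ s f`; if `g` corresponds to `b`, then
`Φ_j(b, p)` is the `j`-th entry of `p` times the multiplication matrix of `(X g)'`. As
`X P ^ s f = P ^ (s + 1)` and `(P ^ (s + 1))' = (s + 1) P ^ s P'`, this gives
`Φ_j(A(a) ^ s a, q) = (s + 1) Φ_j(a, (A(a)ᵀ) ^ s q)`. So in the derivative of the bilinear
expression `Φ_j(a, q)` the `s`-th terms of the two equations cancel, and so do the linear terms
`-a` and `q`.
-/

open Polynomial Matrix

theorem Convex.eq_of_forall_hasDerivWithinAt_zero {𝕜 G : Type*} [RCLike 𝕜] [NormedAddCommGroup G]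
    [NormedSpace 𝕜 G] {f : 𝕜 → G} {s : Set 𝕜} (hs : Convex ℝ s)
    (hf : ∀ x ∈ s, HasDerivWithinAt f 0 s x) {x y : 𝕜} (hx : x ∈ s) (hy : y ∈ s) :
    f x = f y := by
  have h := norm_image_sub_le_of_norm_hasDerivWithin_le hf (fun _ _ => norm_zero.le) hs hy hx
  rwa [zero_mul, norm_le_zero_iff, sub_eq_zero] at h

namespace Polynomial

variable {R : Type*} [Semiring R]

noncomputable def lowerToeplitz (n : ℕ) (f : R[X]) : Matrix (Fin n) (Fin n) R :=
  of fun i k => if (k : ℕ) ≤ i then f.coeff (i - k) else 0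

variable {n : ℕ}

theorem lowerToeplitz_apply (f : R[X]) (i k : Fin n) :
    lowerToeplitz n f i k = if (k : ℕ) ≤ i then f.coeff (i - k) else 0 := rfl

theorem toFn_apply (f : R[X]) (i : Fin n) : toFn n f i = f.coeff i := rfl

theorem lowerToeplitz_mulVec_toFn (f g : R[X]) :
    lowerToeplitz n f *ᵥ toFn n g = toFn n (f * g) := by
  ext i
  have hrange : (Finset.range n).filter (· ≤ (i : ℕ)) = Finset.range (i + 1) := by
    ext l; simp only [Finset.mem_filter, Finset.mem_range]; omega
  calc (lowerToeplitz n f *ᵥ toFn n g) i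
      = ∑ l ∈ Finset.range n, if l ≤ (i : ℕ) then f.coeff (i - l) * g.coeff l else 0 := by
        simp only [Finset.sum_range, mulVec, dotProduct, lowerToeplitz_apply, toFn_apply, ite_mul,
          zero_mul]
    _ = ∑ l ∈ Finset.range (i + 1), f.coeff (i - l) * g.coeff l := by
        rw [← Finset.sum_filter, hrange]
    _ = (f * g).coeff i := by
        rw [coeff_mul, ← Finset.Nat.sum_antidiagonal_swap]
        exact (Finset.Nat.sum_antidiagonal_eq_sum_range_succ
          (fun l m => f.coeff m * g.coeff l) i).symm

theorem lowerToeplitz_mul (f g : R[X]) :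
    lowerToeplitz n f * lowerToeplitz n g = lowerToeplitz n (f * g) := by
  ext i k
  have hcol : (fun l => lowerToeplitz n g l k) = toFn n (X ^ (k : ℕ) * g) := by
    ext l; rw [lowerToeplitz_apply, toFn_apply, coeff_X_pow_mul']
  have h := congrFun (lowerToeplitz_mulVec_toFn (n := n) f (X ^ (k : ℕ) * g)) i
  rwa [← hcol, ← mul_assoc, ← X_pow_mul, mul_assoc, toFn_apply, coeff_X_pow_mul'] at h

theorem lowerToeplitz_one : lowerToeplitz n (1 : R[X]) = 1 := by
  ext i k
  simp only [lowerToeplitz_apply, coeff_one, one_apply, Fin.ext_iff]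
  split_ifs <;> first | rfl | (exfalso; omega)

theorem lowerToeplitz_pow (f : R[X]) (s : ℕ) :
    lowerToeplitz n f ^ s = lowerToeplitz n (f ^ s) := by
  induction s with
  | zero => rw [pow_zero, pow_zero, lowerToeplitz_one]
  | succ s ih => rw [pow_succ, ih, lowerToeplitz_mul, pow_succ]

theorem lowerToeplitz_C_mul (c : R) (f : R[X]) :
    lowerToeplitz n (C c * f) = c • lowerToeplitz n f := by
  ext i k
  simp only [lowerToeplitz_apply, coeff_C_mul, Matrix.smul_apply, smul_eq_mul, mul_ite, mul_zero]

end Polynomial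

section PhaseSystem

variable {n : ℕ}

theorem toeplitzA_toFn (f : ℂ[X]) : toeplitzA (toFn n f) = lowerToeplitz n (X * f) := by
  ext j k
  rw [toeplitzA, of_apply, lowerToeplitz_apply]
  rcases lt_trichotomy (k : ℕ) j with h | h | h
  · rw [dif_pos h, if_pos h.le, toFn_apply, ← coeff_X_mul]
    congr 1
    show (j : ℕ) - k - 1 + 1 = j - k
    omega
  · rw [dif_neg h.not_lt, if_pos h.le, h, Nat.sub_self, coeff_X_mul_zero]
  · rw [dif_neg (by omega), if_neg (by omega)]

theorem Phi_toFn (j : Fin n) (f : ℂ[X]) (p : Fin n → ℂ) :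
    Phi j (toFn n f) p = (p ᵥ* lowerToeplitz n (derivative (X * f))) j := by
  simp only [Phi, vecMul, dotProduct, lowerToeplitz_apply, toFn_apply]
  refine Finset.sum_congr rfl fun m _ => ?_
  split_ifs
  · rw [coeff_derivative, coeff_X_mul]
    push_cast
    ring
  · rw [mul_zero]

theorem derivative_X_mul_pow_mul {R : Type*} [CommSemiring R] (f : R[X]) (s : ℕ) :
    derivative (X * ((X * f) ^ s * f)) = C ((s : R) + 1) * ((X * f) ^ s * derivative (X * f)) := by
  rw [show X * ((X * f) ^ s * f) = (X * f) ^ (s + 1) by ring, derivative_pow]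
  push_cast
  ring

theorem Phi_toeplitzA_pow_mulVec (a q : Fin n → ℂ) (j : Fin n) (s : ℕ) :
    Phi j (toeplitzA a ^ s *ᵥ a) q = (s + 1) * Phi j a ((toeplitzA a)ᵀ ^ s *ᵥ q) := by
  obtain ⟨f, rfl⟩ := surjective_toFn n a
  rw [toeplitzA_toFn, ← transpose_pow, mulVec_transpose, lowerToeplitz_pow,
    lowerToeplitz_mulVec_toFn, Phi_toFn, Phi_toFn, derivative_X_mul_pow_mul, lowerToeplitz_C_mul,
    ← lowerToeplitz_mul, vecMul_smul, vecMul_vecMul, Pi.smul_apply, smul_eq_mul]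

end PhaseSystem

section FirstIntegrals

variable {n : ℕ}

noncomputable def phiForm (j : Fin n) : (Fin n → ℂ) →ₗ[ℂ] (Fin n → ℂ) →ₗ[ℂ] ℂ :=
  LinearMap.mk₂ ℂ (Phi j)
    (fun a a' p => by
      simp only [Phi, ← Finset.sum_add_distrib]
      congr! 1 with m
      split_ifs <;> simp only [Pi.add_apply, add_zero, mul_add, add_mul])
    (fun c a p => by
      simp only [Phi, Finset.smul_sum]
      congr! 1 with m
      split_ifs
      · simp only [Pi.smul_apply, smul_eq_mul]; ring
      · rw [smul_zero])
    (fun a p p' => by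
      simp only [Phi, ← Finset.sum_add_distrib]
      congr! 1 with m
      split_ifs <;> simp only [Pi.add_apply, add_zero, mul_add])
    (fun c a p => by
      simp only [Phi, Finset.smul_sum]
      congr! 1 with m
      split_ifs
      · simp only [Pi.smul_apply, smul_eq_mul]; ring
      · rw [smul_zero])

theorem phiForm_apply (j : Fin n) (a p : Fin n → ℂ) : phiForm j a p = Phi j a p :=
  LinearMap.mk₂_apply _ _ _ _

theorem hasDerivWithinAt_Phi {𝕜 : Type*} [NontriviallyNormedField 𝕜] [NormedAlgebra 𝕜 ℂ]
    {a q : 𝕜 → Fin n → ℂ} {a' q' : Fin n → ℂ} {s : Set 𝕜} {t : 𝕜} (j : Fin n)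
    (ha : ∀ k, HasDerivWithinAt (fun τ => a τ k) (a' k) s t)
    (hq : ∀ k, HasDerivWithinAt (fun τ => q τ k) (q' k) s t) :
    HasDerivWithinAt (fun τ => Phi j (a τ) (q τ)) (Phi j a' (q t) + Phi j (a t) q') s t := by
  simp only [Phi, ← Finset.sum_add_distrib]
  refine HasDerivWithinAt.fun_sum fun m _ => ?_
  split_ifs
  · exact (((ha _).const_mul _).fun_mul (hq m)).congr_deriv (by ring)
  · simpa using hasDerivWithinAt_const t s (0 : ℂ)

theorem Phi_phase_add_Phi_adjoint_eq_zero (j : Fin n) (a q : Fin n → ℂ) (S : Finset ℕ)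
    (e : ℕ → ℂ) :
    Phi j (fun k => -(a k) - 2 * ∑ s ∈ S, e s * (toeplitzA a ^ s *ᵥ a) k) q +
      Phi j a (fun k => q k + 2 * ∑ s ∈ S, e s * ((s : ℂ) + 1) * ((toeplitzA a)ᵀ ^ s *ᵥ q) k) =
      0 := by
  have hphase : (fun k => -(a k) - 2 * ∑ s ∈ S, e s * (toeplitzA a ^ s *ᵥ a) k) =
      -a - (2 : ℂ) • ∑ s ∈ S, e s • (toeplitzA a ^ s *ᵥ a) := by
    ext k; simp [Finset.sum_apply]
  have hadjoint : (fun k => q k + 2 * ∑ s ∈ S, e s * ((s : ℂ) + 1) * ((toeplitzA a)ᵀ ^ s *ᵥ q) k) =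
      q + (2 : ℂ) • ∑ s ∈ S, (e s * ((s : ℂ) + 1)) • ((toeplitzA a)ᵀ ^ s *ᵥ q) := by
    ext k; simp [Finset.sum_apply]
  rw [hphase, hadjoint, ← phiForm_apply, ← phiForm_apply]
  simp only [map_sub, map_neg, map_add, map_smul, map_sum, LinearMap.sub_apply,
    LinearMap.neg_apply, LinearMap.smul_apply, LinearMap.sum_apply,
    smul_eq_mul, phiForm_apply, Phi_toeplitzA_pow_mulVec]
  simp only [mul_assoc]
  ring

end FirstIntegrals

theorem Phi_first_integrals_general
    (n : ℕ) (I : Set ℝ) (hI : Convex ℝ I)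
    (u : ℝ → ℝ)
    (a q : ℝ → Fin n → ℂ)
    (ha : ∀ t ∈ I, ∀ k : Fin n,
      HasDerivWithinAt (fun s => a s k)
        (-(a t k) - 2 * ∑ s ∈ Finset.Icc 1 (n - 1),
          Complex.exp (-(s : ℂ) * (u t : ℂ) * Complex.I) *
            ((toeplitzA (a t) ^ s).mulVec (a t)) k) I t)
    (hq : ∀ t ∈ I, ∀ k : Fin n,
      HasDerivWithinAt (fun s => q s k)
        (q t k + 2 * ∑ s ∈ Finset.Icc 1 (n - 1),
          Complex.exp (-(s : ℂ) * (u t : ℂ) * Complex.I) * ((s : ℂ) + 1) *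
            (((toeplitzA (a t)).transpose ^ s).mulVec (q t)) k) I t) :
    ∀ j : Fin n, ∀ t ∈ I, ∀ t' ∈ I,
      Phi j (a t) (q t) = Phi j (a t') (q t') := by
  intro j t ht t' ht'
  refine hI.eq_of_forall_hasDerivWithinAt_zero (f := fun τ => Phi j (a τ) (q τ))
    (fun τ hτ => ?_) ht ht'
  have hderiv := hasDerivWithinAt_Phi j (ha τ hτ) (hq τ hτ)
  rwa [Phi_phase_add_Phi_adjoint_eq_zero] at hderiv

/-- `Φ_1, …, Φ_n` are first integrals of the coupled phase/adjoint system. -/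
theorem Phi_first_integrals
    (n : ℕ) (hn : 1 ≤ n) (I : Set ℝ) (hI : Convex ℝ I)
    (u : ℝ → ℝ) (hu : ContinuousOn u I)
    (a q : ℝ → Fin n → ℂ)
    (ha : ∀ t ∈ I, ∀ k : Fin n,
      HasDerivWithinAt (fun s => a s k)
        (-(a t k) - 2 * ∑ s ∈ Finset.Icc 1 (n - 1),
          Complex.exp (-(s : ℂ) * (u t : ℂ) * Complex.I) *
            ((toeplitzA (a t) ^ s).mulVec (a t)) k) I t)
    (hq : ∀ t ∈ I, ∀ k : Fin n,
      HasDerivWithinAt (fun s => q s k)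
        (q t k + 2 * ∑ s ∈ Finset.Icc 1 (n - 1),
          Complex.exp (-(s : ℂ) * (u t : ℂ) * Complex.I) * ((s : ℂ) + 1) *
            (((toeplitzA (a t)).transpose ^ s).mulVec (q t)) k) I t) :
    ∀ j : Fin n, ∀ t ∈ I, ∀ t' ∈ I,
      Phi j (a t) (q t) = Phi j (a t') (q t') :=
  Phi_first_integrals_general n I hI u a q ha hq
end

section
/- Fix n ≥ 1 and define Φ_j : ℂ^n × ℂ^n → ℂ by Φ_j(a,p) = ∑_{m=j}^{n} (m−j+1) a_{m−j+1} p_m for 1 ≤ j ≤ n. Then for all indices 1 ≤ s, k ≤ n with s + k − 1 ≤ n, the Poisson bracket satisfies {Φ_s, Φ_k}(a,p) = (k − s) · Φ_{s+k−1}(a,p) for all a, p ∈ ℂ^n. -/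
open Complex

/-- Complex partial derivative of `f(a,p)` in the coordinate `a_k`. -/
noncomputable def pderivA {n : ℕ} (f : (Fin n → ℂ) → (Fin n → ℂ) → ℂ) (k : Fin n)
    (a p : Fin n → ℂ) : ℂ :=
  deriv (fun z => f (Function.update a k z) p) (a k)

/-- Complex partial derivative of `f(a,p)` in the coordinate `p_k`. -/
noncomputable def pderivP {n : ℕ} (f : (Fin n → ℂ) → (Fin n → ℂ) → ℂ) (k : Fin n)
    (a p : Fin n → ℂ) : ℂ :=
  deriv (fun z => f a (Function.update p k z)) (p k)

/-- The Poisson bracket `{f,g} = ∑_k (∂f/∂a_k ∂g/∂p_k − ∂f/∂p_k ∂g/∂a_k)`. -/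
noncomputable def poisson {n : ℕ} (f g : (Fin n → ℂ) → (Fin n → ℂ) → ℂ)
    (a p : Fin n → ℂ) : ℂ :=
  ∑ k : Fin n, (pderivA f k a p * pderivP g k a p - pderivP f k a p * pderivA g k a p)

/-- The value of `∂Φ_j/∂a_i`. -/
noncomputable def DA {n : ℕ} (j i : Fin n) (p : Fin n → ℂ) : ℂ :=
  if h : i.1 + j.1 < n then ((i.1 + 1 : ℕ) : ℂ) * p ⟨i.1 + j.1, h⟩ else 0

/-- The value of `∂Φ_j/∂p_i`. -/
noncomputable def DP {n : ℕ} (j i : Fin n) (a : Fin n → ℂ) : ℂ :=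
  if j.1 ≤ i.1 then
    ((i.1 - j.1 + 1 : ℕ) : ℂ) * a ⟨i.1 - j.1, lt_of_le_of_lt (Nat.sub_le _ _) i.isLt⟩
  else 0

lemma Phi_eq {n : ℕ} (j : Fin n) (a p : Fin n → ℂ) :
    Phi j a p = ∑ m : Fin n,
      (if j.1 ≤ m.1 then
        ((m.1 - j.1 + 1 : ℕ) : ℂ)
          * a ⟨m.1 - j.1, lt_of_le_of_lt (Nat.sub_le _ _) m.isLt⟩ * p m
      else 0) := rfl

lemma phi_update_a {n : ℕ} (j i : Fin n) (a p : Fin n → ℂ) (z : ℂ) :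
    Phi j (Function.update a i z) p = Phi j a p + DA j i p * (z - a i) := by
  rw [← sub_eq_iff_eq_add']
  rw [Phi_eq, Phi_eq, ← Finset.sum_sub_distrib, DA]
  by_cases h : i.1 + j.1 < n
  · rw [dif_pos h, Finset.sum_eq_single (⟨i.1 + j.1, h⟩ : Fin n)]
    · have hj : j.1 ≤ (⟨i.1 + j.1, h⟩ : Fin n).1 := Nat.le_add_left _ _
      rw [if_pos hj, if_pos hj]
      have hidx : (⟨(⟨i.1 + j.1, h⟩ : Fin n).1 - j.1,
          lt_of_le_of_lt (Nat.sub_le _ _) (⟨i.1 + j.1, h⟩ : Fin n).isLt⟩ : Fin n) = i := by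
        ext; simp
      rw [hidx, Function.update_self]
      simp only [Nat.add_sub_cancel]
      ring
    · intro b _ hb
      by_cases hjb : j.1 ≤ b.1
      · rw [if_pos hjb, if_pos hjb]
        have hne : (⟨b.1 - j.1, lt_of_le_of_lt (Nat.sub_le _ _) b.isLt⟩ : Fin n) ≠ i := by
          intro he
          apply hb
          have : b.1 - j.1 = i.1 := congrArg Fin.val he
          ext; simp; omega
        rw [Function.update_of_ne hne]
        ring
      · rw [if_neg hjb, if_neg hjb]; ring
    · simp
  · rw [dif_neg h, zero_mul]
    apply Finset.sum_eq_zero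
    intro b _
    by_cases hjb : j.1 ≤ b.1
    · rw [if_pos hjb, if_pos hjb]
      have hne : (⟨b.1 - j.1, lt_of_le_of_lt (Nat.sub_le _ _) b.isLt⟩ : Fin n) ≠ i := by
        intro he
        have : b.1 - j.1 = i.1 := congrArg Fin.val he
        have := b.isLt; omega
      rw [Function.update_of_ne hne]
      ring
    · rw [if_neg hjb, if_neg hjb]; ring

lemma phi_update_p {n : ℕ} (j i : Fin n) (a p : Fin n → ℂ) (z : ℂ) :
    Phi j a (Function.update p i z) = Phi j a p + DP j i a * (z - p i) := by
  rw [← sub_eq_iff_eq_add']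
  rw [Phi_eq, Phi_eq, ← Finset.sum_sub_distrib, DP]
  rw [Finset.sum_eq_single i]
  · by_cases hj : j.1 ≤ i.1
    · rw [if_pos hj, if_pos hj, if_pos hj, Function.update_self]
      ring
    · rw [if_neg hj, if_neg hj, if_neg hj]; ring
  · intro b _ hb
    by_cases hjb : j.1 ≤ b.1
    · rw [if_pos hjb, if_pos hjb, Function.update_of_ne hb]; ring
    · rw [if_neg hjb, if_neg hjb]; ring
  · simp

lemma pderivA_Phi {n : ℕ} (j i : Fin n) (a p : Fin n → ℂ) :
    pderivA (Phi j) i a p = DA j i p := by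
  rw [pderivA]
  simp only [phi_update_a]
  have h1 : HasDerivAt (fun z : ℂ => Phi j a p + DA j i p * (z - a i)) (DA j i p) (a i) := by
    simpa using (((hasDerivAt_id (a i)).sub_const (a i)).const_mul (DA j i p)).const_add
      (Phi j a p)
  exact h1.deriv

lemma pderivP_Phi {n : ℕ} (j i : Fin n) (a p : Fin n → ℂ) :
    pderivP (Phi j) i a p = DP j i a := by
  rw [pderivP]
  simp only [phi_update_p]
  have h1 : HasDerivAt (fun z : ℂ => Phi j a p + DP j i a * (z - p i)) (DP j i a) (p i) := by
    simpa using (((hasDerivAt_id (p i)).sub_const (p i)).const_mul (DP j i a)).const_add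
      (Phi j a p)
  exact h1.deriv

lemma DA_eval {n : ℕ} (j i : Fin n) (p : Fin n → ℂ) (x : ℕ) (hx : x < n)
    (hxi : i.1 + j.1 = x) :
    DA j i p = ((i.1 + 1 : ℕ) : ℂ) * p ⟨x, hx⟩ := by
  rw [DA, dif_pos (show i.1 + j.1 < n from hxi ▸ hx)]
  exact congrArg (((i.1 + 1 : ℕ) : ℂ) * p ·) (Fin.ext hxi)

lemma DA_eval0 {n : ℕ} (j i : Fin n) (p : Fin n → ℂ) (h : ¬ i.1 + j.1 < n) :
    DA j i p = 0 := dif_neg h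

lemma DP_eval {n : ℕ} (j i : Fin n) (a : Fin n → ℂ) (x : ℕ) (hx : x < n)
    (hij : j.1 ≤ i.1) (hxe : i.1 - j.1 = x) :
    DP j i a = ((i.1 - j.1 + 1 : ℕ) : ℂ) * a ⟨x, hx⟩ := by
  rw [DP, if_pos hij]
  exact congrArg (((i.1 - j.1 + 1 : ℕ) : ℂ) * a ·) (Fin.ext hxe)

lemma DP_eval0 {n : ℕ} (j i : Fin n) (a : Fin n → ℂ) (h : ¬ j.1 ≤ i.1) :
    DP j i a = 0 := if_neg h

lemma fin_sub_val {n : ℕ} [NeZero n] (m s : Fin n) :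
    (m - s).1 = if s.1 ≤ m.1 then m.1 - s.1 else m.1 + n - s.1 := by
  have hd : (m - s).1 = (n - s.1 + m.1) % n := by rw [Fin.sub_def]
  have hm := m.isLt
  have hs := s.isLt
  rcases le_or_gt s.1 m.1 with h | h
  · rw [if_pos h, hd]
    have he : n - s.1 + m.1 = (m.1 - s.1) + n := by omega
    rw [he, Nat.add_mod_right]
    exact Nat.mod_eq_of_lt (by omega)
  · rw [if_neg (not_le.mpr h), hd, Nat.mod_eq_of_lt (by omega)]
    omega

lemma main_aux {n : ℕ} (s k q : Fin n) (hq : q.1 = s.1 + k.1) (a p : Fin n → ℂ) :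
    poisson (Phi s) (Phi k) a p = ((k.1 : ℂ) - (s.1 : ℂ)) * Phi q a p := by
  haveI : NeZero n := ⟨by have := q.isLt; omega⟩
  rw [poisson]
  simp only [pderivA_Phi, pderivP_Phi]
  rw [Finset.sum_sub_distrib]
  have e1 : ∑ i : Fin n, DA s i p * DP k i a = ∑ m : Fin n, DA s (m - s) p * DP k (m - s) a :=
    (Fintype.sum_equiv (Equiv.subRight s) _ _ fun _ => rfl).symm
  have e2 : ∑ i : Fin n, DP s i a * DA k i p = ∑ m : Fin n, DP s (m - k) a * DA k (m - k) p :=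
    (Fintype.sum_equiv (Equiv.subRight k) _ _ fun _ => rfl).symm
  rw [e1, e2, ← Finset.sum_sub_distrib, Phi_eq, Finset.mul_sum]
  apply Finset.sum_congr rfl
  intro m _
  have hm2 := m.isLt
  have hq2 := q.isLt
  rcases le_or_gt q.1 m.1 with hm | hm
  · -- main case
    have hs : s.1 ≤ m.1 := by omega
    have hk : k.1 ≤ m.1 := by omega
    have hvs : (m - s).1 = m.1 - s.1 := by rw [fin_sub_val, if_pos hs]
    have hvk : (m - k).1 = m.1 - k.1 := by rw [fin_sub_val, if_pos hk]
    rw [DA_eval s (m - s) p m.1 m.isLt (by omega),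
        DP_eval k (m - s) a (m.1 - q.1) (lt_of_le_of_lt (Nat.sub_le _ _) m.isLt)
          (by omega) (by omega),
        DP_eval s (m - k) a (m.1 - q.1) (lt_of_le_of_lt (Nat.sub_le _ _) m.isLt)
          (by omega) (by omega),
        DA_eval k (m - k) p m.1 m.isLt (by omega),
        if_pos hm]
    simp only [hvs, hvk, Fin.eta]
    have c1 : m.1 - s.1 - k.1 = m.1 - q.1 := by omega
    have c2 : m.1 - k.1 - s.1 = m.1 - q.1 := by omega
    rw [c1, c2]
    push_cast [Nat.cast_sub hs, Nat.cast_sub hk, Nat.cast_sub hm]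
    ring
  · -- vanishing case
    have h1 : DA s (m - s) p * DP k (m - s) a = 0 := by
      rcases le_or_gt s.1 m.1 with hs | hs
      · have hvs : (m - s).1 = m.1 - s.1 := by rw [fin_sub_val, if_pos hs]
        rw [DP_eval0 k (m - s) a (by omega), mul_zero]
      · have hvs : (m - s).1 = m.1 + n - s.1 := by rw [fin_sub_val, if_neg (not_le.mpr hs)]
        rw [DA_eval0 s (m - s) p (by omega), zero_mul]
    have h2 : DP s (m - k) a * DA k (m - k) p = 0 := by
      rcases le_or_gt k.1 m.1 with hk | hk
      · have hvk : (m - k).1 = m.1 - k.1 := by rw [fin_sub_val, if_pos hk]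
        rw [DP_eval0 s (m - k) a (by omega), zero_mul]
      · have hvk : (m - k).1 = m.1 + n - k.1 := by rw [fin_sub_val, if_neg (not_le.mpr hk)]
        rw [DA_eval0 k (m - k) p (by omega), mul_zero]
    rw [h1, h2, if_neg (not_le.mpr hm)]
    ring

/-- for `s + k - 1 ≤ n` (1-indexed), `{Φ_s, Φ_k} = (k - s)·Φ_{s+k-1}`. -/
theorem poisson_Phi_eq
    (n : ℕ) (hn : 1 ≤ n) (s k : Fin n) (h : s.1 + k.1 + 1 ≤ n) :
    ∀ a p : Fin n → ℂ,
      poisson (Phi s) (Phi k) a p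
        = ((k.1 : ℂ) - (s.1 : ℂ)) * Phi ⟨s.1 + k.1, by omega⟩ a p := by
  intro a p
  exact main_aux s k ⟨s.1 + k.1, by omega⟩ rfl a p
end

section
/- Fix n ≥ 1 and define Φ_j : ℂ^n × ℂ^n → ℂ by Φ_j(a,p) = ∑_{m=j}^{n} (m−j+1) a_{m−j+1} p_m for 1 ≤ j ≤ n. Then for all indices 1 ≤ s, k ≤ n with s + k − 1 > n, the Poisson bracket vanishes identically: {Φ_s, Φ_k}(a,p) = 0 for all a, p ∈ ℂ^n. -/
open Complex

lemma deriv_cz (c d x : ℂ) : deriv (fun z => c * z * d) x = c * d := by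
  have : (fun z : ℂ => c * z * d) = fun z => (c * d) * z := by funext z; ring
  rw [this, deriv_const_mul_field, deriv_id'']
  ring

lemma pderivA_Phi_s11 {n : ℕ} (j i : Fin n) (a p : Fin n → ℂ) :
    pderivA (Phi j) i a p =
      if h : j.1 + i.1 < n then ((i.1 + 1 : ℕ) : ℂ) * p ⟨j.1 + i.1, h⟩ else 0 := by
  unfold pderivA Phi
  have key : ∀ m : Fin n,
      deriv (fun z => if _ : j.1 ≤ m.1 then
          ((m.1 - j.1 + 1 : ℕ) : ℂ) * Function.update a i z ⟨m.1 - j.1, by have := m.isLt; omega⟩ * p m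
        else 0) (a i)
      = if (j.1 ≤ m.1 ∧ m.1 - j.1 = i.1) then ((m.1 - j.1 + 1 : ℕ) : ℂ) * p m else 0 := by
    intro m
    by_cases hm : j.1 ≤ m.1
    · simp only [dif_pos hm, Function.update_apply]
      by_cases he : (⟨m.1 - j.1, by have := m.isLt; omega⟩ : Fin n) = i
      · have he' : m.1 - j.1 = i.1 := by rw [← he]
        rw [if_pos ⟨hm, he'⟩]
        simp only [he, if_true, eq_self_iff_true]
        exact deriv_cz _ _ _
      · have he' : ¬ (m.1 - j.1 = i.1) := fun hc => he (Fin.ext hc)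
        simp [he, he', deriv_const]
    · simp [hm]
  rw [deriv_fun_sum (fun m _ => ?_)]
  · simp only [key]
    by_cases hlt : j.1 + i.1 < n
    · rw [dif_pos hlt, Finset.sum_eq_single (⟨j.1 + i.1, hlt⟩ : Fin n)]
      · simp
      · intro b _ hb
        rw [if_neg]
        intro ⟨h1, h2⟩
        exact hb (Fin.ext (show b.1 = j.1 + i.1 by omega))
      · simp
    · rw [dif_neg hlt]
      apply Finset.sum_eq_zero
      intro b _
      rw [if_neg]
      intro ⟨h1, h2⟩
      have := b.isLt; omega
  · by_cases hm : j.1 ≤ m.1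
    · simp only [dif_pos hm, Function.update_apply]
      by_cases he : (⟨m.1 - j.1, by have := m.isLt; omega⟩ : Fin n) = i
      · simp only [he, if_true, eq_self_iff_true]; fun_prop
      · simp only [if_neg he]; fun_prop
    · simp only [dif_neg hm]; fun_prop

lemma pderivP_Phi_s11 {n : ℕ} (j i : Fin n) (a p : Fin n → ℂ) :
    pderivP (Phi j) i a p =
      if h : j.1 ≤ i.1 then ((i.1 - j.1 + 1 : ℕ) : ℂ) * a ⟨i.1 - j.1, by have := i.isLt; omega⟩
      else 0 := by
  unfold pderivP Phi
  have key : ∀ m : Fin n,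
      deriv (fun z => if _ : j.1 ≤ m.1 then
          ((m.1 - j.1 + 1 : ℕ) : ℂ) * a ⟨m.1 - j.1, by have := m.isLt; omega⟩ * Function.update p i z m
        else 0) (p i)
      = if (j.1 ≤ m.1 ∧ m = i) then ((m.1 - j.1 + 1 : ℕ) : ℂ) * a ⟨m.1 - j.1, by have := m.isLt; omega⟩ else 0 := by
    intro m
    by_cases hm : j.1 ≤ m.1
    · simp only [dif_pos hm, Function.update_apply]
      by_cases he : m = i
      · subst he
        rw [if_pos ⟨hm, rfl⟩]
        simp only [if_true, eq_self_iff_true]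
        have : (fun z : ℂ => ((m.1 - j.1 + 1 : ℕ) : ℂ) * a ⟨m.1 - j.1, by have := m.isLt; omega⟩ * z)
            = fun z : ℂ => (((m.1 - j.1 + 1 : ℕ) : ℂ) * a ⟨m.1 - j.1, by have := m.isLt; omega⟩) * z := by
          funext z; ring
        rw [this, deriv_const_mul_field, deriv_id'']
        ring
      · simp [he, hm]
    · simp [hm]
  rw [deriv_fun_sum (fun m _ => ?_)]
  · simp only [key]
    by_cases hji : j.1 ≤ i.1
    · rw [dif_pos hji, Finset.sum_eq_single i]
      · simp [hji]
      · intro b _ hb; simp [hb]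
      · simp
    · rw [dif_neg hji]
      apply Finset.sum_eq_zero
      intro b _
      rw [if_neg]
      intro ⟨h1, h2⟩
      exact hji (h2 ▸ h1)
  · by_cases hm : j.1 ≤ m.1
    · simp only [dif_pos hm, Function.update_apply]
      by_cases he : m = i
      · simp only [if_pos he]; fun_prop
      · simp only [if_neg he]; fun_prop
    · simp only [dif_neg hm]; fun_prop

/-- for `s + k - 1 > n` (1-indexed), `{Φ_s, Φ_k} = 0` identically. -/
theorem poisson_Phi_eq_zero
    (n : ℕ) (hn : 1 ≤ n) (s k : Fin n) (h : n < s.1 + k.1 + 1) :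
    ∀ a p : Fin n → ℂ, poisson (Phi s) (Phi k) a p = 0 := by
  intro a p
  unfold poisson
  apply Finset.sum_eq_zero
  intro t _
  have e1 : pderivA (Phi s) t a p * pderivP (Phi k) t a p = 0 := by
    rw [pderivA_Phi_s11, pderivP_Phi_s11]
    by_cases h1 : s.1 + t.1 < n
    · rw [dif_neg (show ¬ k.1 ≤ t.1 by omega), mul_zero]
    · rw [dif_neg h1, zero_mul]
  have e2 : pderivP (Phi s) t a p * pderivA (Phi k) t a p = 0 := by
    rw [pderivP_Phi_s11, pderivA_Phi_s11]
    by_cases h1 : k.1 + t.1 < n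
    · rw [dif_neg (show ¬ s.1 ≤ t.1 by omega), zero_mul]
    · rw [dif_neg h1, mul_zero]
  rw [e1, e2, sub_zero]
end

section
/- Fix n ≥ 1 and let a ∈ ℂ^n. Then for every s with 0 ≤ s ≤ n−1, the vector A(a)^s a satisfies (A(a)^s a)_k = 0 for all 1 ≤ k ≤ s, and (A(a)^s a)_{s+1} = a_1^{s+1}. In particular, A(a)^{n−1} a = (0, …, 0, a_1^n), so that in the Hamiltonian H(a,q,u) = 2 Re[∑_{k=1}^{n}(−a − 2∑_{s=1}^{n−1} e^{−isu}A(a)^s a)_k q_k], regarded as a trigonometric polynomial in u, the coefficient of e^{−i(n−1)u} inside the bracket equals −2 a_1^n q_n; hence H has degree exactly n−1 in u whenever a_1 ≠ 0 and q_n ≠ 0. -/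
open Complex

lemma toeplitz_key {n : ℕ} (a : Fin n → ℂ) (s : ℕ) :
    ∀ k : Fin n, (k.1 < s → ((toeplitzA a ^ s).mulVec a) k = 0) ∧
      (k.1 = s → ((toeplitzA a ^ s).mulVec a) k = a ⟨0, by have := k.isLt; omega⟩ ^ (s + 1)) := by
  induction s with
  | zero =>
    intro k
    simp only [pow_zero, Matrix.one_mulVec]
    exact ⟨fun h => absurd h (Nat.not_lt_zero _), fun h => by
      have : k = ⟨0, by have := k.isLt; omega⟩ := Fin.ext h
      rw [this, pow_one]⟩
  | succ s ih =>
    intro k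
    rw [pow_succ', ← Matrix.mulVec_mulVec]
    set v := (toeplitzA a ^ s).mulVec a with hv
    have hval : (toeplitzA a).mulVec v k = ∑ j : Fin n,
        (if _ : (j : ℕ) < (k : ℕ) then a ⟨(k : ℕ) - (j : ℕ) - 1, by have := k.isLt; omega⟩ else 0) * v j := by
      rfl
    constructor
    · intro hk
      rw [hval]
      apply Finset.sum_eq_zero
      intro j _
      by_cases hj : (j : ℕ) < (k : ℕ)
      · rw [dif_pos hj, (ih j).1 (by omega), mul_zero]
      · rw [dif_neg hj, zero_mul]
    · intro hk
      rw [hval]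
      have h0 : (0:ℕ) < n := by have := k.isLt; omega
      have hs : s < n := by omega
      rw [Finset.sum_eq_single ⟨s, hs⟩]
      · rw [dif_pos (by simp [hk])]
        rw [(ih ⟨s, hs⟩).2 rfl]
        have : ((k : ℕ) - s - 1) = 0 := by omega
        simp only [this]
        rw [← pow_succ']
      · intro j _ hj
        by_cases hjk : (j : ℕ) < (k : ℕ)
        · rw [dif_pos hjk]
          rcases Nat.lt_or_ge (j:ℕ) s with h | h
          · rw [(ih j).1 h, mul_zero]
          · exfalso; apply hj; apply Fin.ext; simp; omega
        · rw [dif_neg hjk, zero_mul]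
      · intro h; exact absurd (Finset.mem_univ _) h

/-- for `0 ≤ s ≤ n-1`, `(A(a)^s a)_k = 0` for `1 ≤ k ≤ s` and
`(A(a)^s a)_{s+1} = a_1^{s+1}`. In particular `A(a)^{n-1} a = (0, …, 0, a_1^n)`, so the
coefficient of `e^{-i(n-1)u}` inside the bracket of the Hamiltonian equals `-2a_1^n q_n`,
which is nonzero whenever `a_1 ≠ 0` and `q_n ≠ 0`. -/
theorem toeplitz_pow_mulVec_structure
    (n : ℕ) (hn : 1 ≤ n) (a : Fin n → ℂ) :
    (∀ s : ℕ, s ≤ n - 1 →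
      (∀ k : Fin n, k.1 < s → ((toeplitzA a ^ s).mulVec a) k = 0) ∧
      (∀ hs : s < n, ((toeplitzA a ^ s).mulVec a) ⟨s, hs⟩ = a ⟨0, by omega⟩ ^ (s + 1)))
    ∧ (∀ k : Fin n, ((toeplitzA a ^ (n - 1)).mulVec a) k =
        if k.1 = n - 1 then a ⟨0, by omega⟩ ^ n else 0)
    ∧ (∀ q : Fin n → ℂ,
        ∑ k : Fin n, (-2 * ((toeplitzA a ^ (n - 1)).mulVec a) k) * q k
          = -2 * a ⟨0, by omega⟩ ^ n * q ⟨n - 1, by omega⟩)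
    ∧ (∀ q : Fin n → ℂ, a ⟨0, by omega⟩ ≠ 0 → q ⟨n - 1, by omega⟩ ≠ 0 →
        -2 * a ⟨0, by omega⟩ ^ n * q ⟨n - 1, by omega⟩ ≠ 0) := by
  have key2 : ∀ k : Fin n, ((toeplitzA a ^ (n - 1)).mulVec a) k =
      if k.1 = n - 1 then a ⟨0, by omega⟩ ^ n else 0 := by
    intro k
    by_cases hk : k.1 = n - 1
    · rw [if_pos hk, (toeplitz_key a (n - 1) k).2 hk]
      congr 1
      omega
    · rw [if_neg hk]
      exact (toeplitz_key a (n - 1) k).1 (by have := k.isLt; omega)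
  refine ⟨fun s _ => ⟨fun k hk => (toeplitz_key a s k).1 hk,
      fun hs => (toeplitz_key a s ⟨s, hs⟩).2 rfl⟩, key2, ?_, ?_⟩
  · intro q
    rw [Finset.sum_eq_single (⟨n - 1, by omega⟩ : Fin n)]
    · rw [key2]; simp
    · intro j _ hj
      rw [key2, if_neg (fun h => hj (Fin.ext h)), mul_zero, zero_mul]
    · intro h; exact absurd (Finset.mem_univ _) h
  · intro q ha hq
    exact mul_ne_zero (mul_ne_zero (by norm_num) (pow_ne_zero _ ha)) hq
end
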